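/- The primal master problem solution is recovered from any dual solution: if θ* ∈ Δ_n minimizes G over Δ_n and w = Σ_{i=1}^n θ*_i g_i is the aggregated subgradient, then d* = −η·w is a global minimizer of F on ℝ^m. -/

import Mathlib

open RealInnerProductSpace

/-- The primal master problem objective `F(d) = max_i (⟨g_i, d⟩ − α_i) + ‖d‖²/(2η)`. -/
noncomputable def primalF {m n : ℕ} (hn : 0 < n)
    (g : Fin n → EuclideanSpace ℝ (Fin m)) (α : Fin n → ℝ) (η : ℝ)
    (d : EuclideanSpace ℝ (Fin m)) : ℝ :=
  Finset.univ.sup' (Finset.univ_nonempty_iff.mpr (Fin.pos_iff_nonempty.mp hn))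
    (fun i => ⟪g i, d⟫ - α i) + ‖d‖ ^ 2 / (2 * η)

/-- The dual master problem objective `G(θ) = (η/2)‖Σ θ_i g_i‖² + Σ θ_i α_i`. -/
noncomputable def dualG {m n : ℕ}
    (g : Fin n → EuclideanSpace ℝ (Fin m)) (α : Fin n → ℝ) (η : ℝ)
    (θ : Fin n → ℝ) : ℝ :=
  (η / 2) * ‖∑ i, θ i • g i‖ ^ 2 + ∑ i, θ i * α i

/-!
Weak duality gives `−G(θ) ≤ F(d)` for every `θ ∈ Δ_n` and every `d`. Conversely, the first-order
optimality condition of `G` at a minimizer `θ*`, tested along the edges towards the vertices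
`e_i`, reads `η‖w‖² + ⟨θ*, α⟩ ≤ η⟨g_i, w⟩ + α_i` for every `i`; plugging this into the
definition of `F` gives `F(−ηw) ≤ −G(θ*)`, so `−ηw` attains the lower bound.
-/

open Finset Filter Topology

theorem nonneg_of_forall_mul_add_mul_sq_nonneg {a b : ℝ}
    (h : ∀ t : ℝ, 0 < t → t ≤ 1 → 0 ≤ a * t + b * t ^ 2) : 0 ≤ a := by
  have hlim : Tendsto (fun t : ℝ => a + b * t) (𝓝[>] 0) (𝓝 a) :=
    (Continuous.tendsto' (by fun_prop) 0 a (by simp)).mono_left nhdsWithin_le_nhds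
  refine ge_of_tendsto hlim ?_
  filter_upwards [Ioc_mem_nhdsGT (zero_lt_one' ℝ)] with t ⟨ht0, ht1⟩
  have := h t ht0 ht1
  nlinarith

theorem sum_mul_le_sup'_of_mem_stdSimplex {ι : Type*} [Fintype ι] {θ : ι → ℝ}
    (hθ : θ ∈ stdSimplex ℝ ι) (hne : (univ : Finset ι).Nonempty) (f : ι → ℝ) :
    ∑ i, θ i * f i ≤ univ.sup' hne f := by
  have h := centerMass_le_sup (s := univ) (f := f) (fun i _ => hθ.1 i)
    (by rw [hθ.2]; exact one_pos)
  simpa [centerMass, hθ.2] using h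

section InnerProductSpace

variable {E : Type*} [NormedAddCommGroup E] [InnerProductSpace ℝ E]

theorem neg_half_mul_norm_sq_sub_inner_le {η : ℝ} (hη : 0 < η) (w d : E) :
    -(η / 2 * ‖w‖ ^ 2) - ⟪w, d⟫ ≤ ‖d‖ ^ 2 / (2 * η) := by
  have h := sq_nonneg ‖d + η • w‖
  rw [norm_add_sq_real, real_inner_smul_right, norm_smul, Real.norm_eq_abs, abs_of_pos hη,
    mul_pow, real_inner_comm] at h
  rw [le_div_iff₀ (by positivity)]
  nlinarith

variable {ι : Type*} [Fintype ι] [DecidableEq ι]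

theorem sum_smul_add_smul_single_sub (θ : ι → ℝ) (g : ι → E) (i : ι) (t : ℝ) :
    ∑ j, (θ + t • (Pi.single i 1 - θ) : ι → ℝ) j • g j =
      ∑ j, θ j • g j + t • (g i - ∑ j, θ j • g j) := by
  simp only [Pi.add_apply, Pi.smul_apply, Pi.sub_apply, smul_eq_mul, add_smul, mul_smul,
    sub_smul, sum_add_distrib, sum_sub_distrib, ← smul_sum, smul_sub]
  simp [Pi.single_apply]

theorem sum_mul_add_smul_single_sub (θ α : ι → ℝ) (i : ι) (t : ℝ) :
    ∑ j, (θ + t • (Pi.single i 1 - θ) : ι → ℝ) j * α j =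
      ∑ j, θ j * α j + t * (α i - ∑ j, θ j * α j) := by
  simp only [Pi.add_apply, Pi.smul_apply, Pi.sub_apply, smul_eq_mul, add_mul, mul_assoc,
    sub_mul, sum_add_distrib, sum_sub_distrib, ← mul_sum, mul_sub]
  simp [Pi.single_apply]

theorem le_inner_of_isMinOn_stdSimplex {g : ι → E} {α : ι → ℝ} {η : ℝ} {θ : ι → ℝ}
    (hθ : θ ∈ stdSimplex ℝ ι)
    (hmin : IsMinOn (fun θ => η / 2 * ‖∑ j, θ j • g j‖ ^ 2 + ∑ j, θ j * α j) (stdSimplex ℝ ι) θ)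
    (i : ι) :
    η * ‖∑ j, θ j • g j‖ ^ 2 + ∑ j, θ j * α j ≤ η * ⟪g i, ∑ j, θ j • g j⟫ + α i := by
  set w := ∑ j, θ j • g j
  set S := ∑ j, θ j * α j
  suffices 0 ≤ (η * ⟪w, g i - w⟫ + (α i - S)) by
    rw [inner_sub_right, real_inner_self_eq_norm_sq, real_inner_comm] at this
    linarith
  refine nonneg_of_forall_mul_add_mul_sq_nonneg (b := η / 2 * ‖g i - w‖ ^ 2) fun t ht0 ht1 => ?_
  have hmem : θ + t • (Pi.single i 1 - θ) ∈ stdSimplex ℝ ι := by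
    simpa [AffineMap.lineMap_apply_module', add_comm] using
      (convex_stdSimplex ℝ ι).lineMap_mem hθ (single_mem_stdSimplex ℝ i) ⟨ht0.le, ht1⟩
  have h := isMinOn_iff.mp hmin _ hmem
  simp only [sum_smul_add_smul_single_sub, sum_mul_add_smul_single_sub, norm_add_sq_real,
    real_inner_smul_right, norm_smul, Real.norm_eq_abs, abs_of_pos ht0] at h
  nlinarith

end InnerProductSpace

theorem neg_dualG_le_primalF {m n : ℕ} (hn : 0 < n) (g : Fin n → EuclideanSpace ℝ (Fin m))
    (α : Fin n → ℝ) {η : ℝ} (hη : 0 < η) {θ : Fin n → ℝ} (hθ : θ ∈ stdSimplex ℝ (Fin n))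
    (d : EuclideanSpace ℝ (Fin m)) :
    -dualG g α η θ ≤ primalF hn g α η d := by
  have hmax := sum_mul_le_sup'_of_mem_stdSimplex hθ
    (univ_nonempty_iff.mpr (Fin.pos_iff_nonempty.mp hn)) (fun i => ⟪g i, d⟫ - α i)
  have hquad := neg_half_mul_norm_sq_sub_inner_le hη (∑ i, θ i • g i) d
  simp only [mul_sub, sum_sub_distrib, ← real_inner_smul_left, ← sum_inner] at hmax
  rw [dualG, primalF]
  linarith

theorem primalF_neg_smul_le_neg_dualG {m n : ℕ} (hn : 0 < n)
    (g : Fin n → EuclideanSpace ℝ (Fin m)) (α : Fin n → ℝ) {η : ℝ} (hη : 0 < η)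
    {θ : Fin n → ℝ} (hopt : ∀ i, η * ‖∑ j, θ j • g j‖ ^ 2 + ∑ j, θ j * α j ≤
      η * ⟪g i, ∑ j, θ j • g j⟫ + α i) :
    primalF hn g α η ((-η) • ∑ i, θ i • g i) ≤ -dualG g α η θ := by
  have hne : (univ : Finset (Fin n)).Nonempty := univ_nonempty_iff.mpr (Fin.pos_iff_nonempty.mp hn)
  have hmax : univ.sup' hne (fun i => ⟪g i, (-η) • ∑ j, θ j • g j⟫ - α i) ≤
      -(η * ‖∑ j, θ j • g j‖ ^ 2) - ∑ j, θ j * α j :=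
    sup'_le _ _ fun i _ => by
      rw [real_inner_smul_right]
      linarith [hopt i]
  have hnorm : ‖(-η) • ∑ j, θ j • g j‖ ^ 2 / (2 * η) = η / 2 * ‖∑ j, θ j • g j‖ ^ 2 := by
    rw [norm_smul, mul_pow, norm_neg, Real.norm_eq_abs, sq_abs]
    field_simp
  rw [primalF, dualG, hnorm]
  linarith

theorem stmt_8_general {m n : ℕ} (hn : 0 < n)
    (g : Fin n → EuclideanSpace ℝ (Fin m)) (α : Fin n → ℝ)
    (η : ℝ) (hη : 0 < η)
    (θs : Fin n → ℝ) (hθs : ∀ i, 0 ≤ θs i) (hθs1 : ∑ i, θs i = 1)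
    (hmin : ∀ θ' : Fin n → ℝ, (∀ i, 0 ≤ θ' i) → (∑ i, θ' i = 1) →
      dualG g α η θs ≤ dualG g α η θ') :
    ∀ d : EuclideanSpace ℝ (Fin m),
      primalF hn g α η ((-η) • ∑ i, θs i • g i) ≤ primalF hn g α η d := by
  intro d
  have hθs_mem : θs ∈ stdSimplex ℝ (Fin n) := ⟨hθs, hθs1⟩
  have hopt := le_inner_of_isMinOn_stdSimplex hθs_mem (g := g) (α := α) (η := η)
    (isMinOn_iff.mpr fun θ' hθ' => hmin θ' hθ'.1 hθ'.2)
  exact (primalF_neg_smul_le_neg_dualG hn g α hη hopt).trans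
    (neg_dualG_le_primalF hn g α hη hθs_mem d)

/-- The primal master problem solution is recovered from any dual solution: if `θ*`
minimizes `G` over the simplex and `w = Σ θ*_i g_i`, then `d* = −η·w` is a global
minimizer of `F`. -/
theorem stmt_8 {m n : ℕ} (hn : 0 < n)
    (g : Fin n → EuclideanSpace ℝ (Fin m)) (α : Fin n → ℝ) (hα : ∀ i, 0 ≤ α i)
    (η : ℝ) (hη : 0 < η)
    (θs : Fin n → ℝ) (hθs : ∀ i, 0 ≤ θs i) (hθs1 : ∑ i, θs i = 1)
    (hmin : ∀ θ' : Fin n → ℝ, (∀ i, 0 ≤ θ' i) → (∑ i, θ' i = 1) →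
      dualG g α η θs ≤ dualG g α η θ') :
    ∀ d : EuclideanSpace ℝ (Fin m),
      primalF hn g α η ((-η) • ∑ i, θs i • g i) ≤ primalF hn g α η d :=
  stmt_8_general hn g α η hη θs hθs hθs1 hmin
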